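/- For any subset S ⊆ ℝⁿ, the full subcategory W(S) of mod-Λ consisting of all modules M with S ⊆ D(M) is a wide subcategory: it is closed under direct summands, extensions, kernels and cokernels of morphisms between its objects. -/
import Mathlib


open scoped BigOperators

noncomputable section

/-- Dot product of a real vector with a dimension vector. -/
def dprod {n : ℕ} (x : Fin n → ℝ) (v : Fin n → ℕ) : ℝ := ∑ i, x i * (v i : ℝ)

/-- Slope of a dimension vector with respect to a linear stability function
`Z(x) = a·x + i b·x`. -/
def zslope {n : ℕ} (a b : Fin n → ℝ) (v : Fin n → ℕ) : ℝ := dprod a v / dprod b v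

/-- The semistability set `D(M)` of a module `M`, with respect to a dimension-vector
assignment `d`. -/
def DSet {Λ : Type} [Ring Λ] {n : ℕ}
    (d : (N : Type) → [AddCommGroup N] → [Module Λ N] → Fin n → ℕ)
    (M : Type) [AddCommGroup M] [Module Λ M] : Set (Fin n → ℝ) :=
  {x | dprod x (d M) = 0 ∧ ∀ M' : Submodule Λ M, dprod x (d ↥M') ≤ 0}

/-- A module is Schurian if it is nonzero and every nonzero endomorphism is invertible,
i.e. its endomorphism ring is a division algebra. -/
def Schurian (Λ : Type) [Ring Λ] (M : Type) [AddCommGroup M] [Module Λ M] : Prop :=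
  (∃ y : M, y ≠ 0) ∧ ∀ f : M →ₗ[Λ] M, f ≠ 0 → Function.Bijective f

/-- `X` belongs to `E(M)`: `X` admits a finite filtration with all subquotients
isomorphic to `M`. -/
def IsFiltered (Λ : Type) [Ring Λ] (M : Type) [AddCommGroup M] [Module Λ M]
    (X : Type) [AddCommGroup X] [Module Λ X] : Prop :=
  ∃ (k : ℕ) (F : Fin (k + 1) → Submodule Λ X), Monotone F ∧ F 0 = ⊥ ∧ F (Fin.last k) = ⊤ ∧
    ∀ i : Fin k, Nonempty
      ((↥(F i.succ) ⧸ Submodule.comap (F i.succ).subtype (F i.castSucc)) ≃ₗ[Λ] M)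

/-- Slope at time `t` of a dimension vector, for a nonlinear stability function
`Z_t(x) = a_t·x + i b_t·x`. -/
def muZ {n : ℕ} (a b : ℝ → Fin n → ℝ) (t : ℝ) (v : Fin n → ℕ) : ℝ :=
  dprod (a t) v / dprod (b t) v

/-- `M` is `Z_t`-semistable: every nonzero submodule has zslope at least that of `M`. -/
def Semistable {Λ : Type} [Ring Λ] {n : ℕ}
    (d : (N : Type) → [AddCommGroup N] → [Module Λ N] → Fin n → ℕ)
    (a b : ℝ → Fin n → ℝ) (t : ℝ)
    (M : Type) [AddCommGroup M] [Module Λ M] : Prop :=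
  ∀ M' : Submodule Λ M, M' ≠ ⊥ → muZ a b t (d M) ≤ muZ a b t (d ↥M')

/-- The nonlinear stability function given by `(a, b)` is green (for `Λ`): at every
semistable pair `(N, t₀)` (with `N` a nonzero finite-length `Λ`-module, `N`
`Z_{t₀}`-semistable and `μ_{t₀}(N) = t₀`), the derivative of `t ↦ μ_t(N)` at `t₀`
is `< 1`. -/
def ZGreen {Λ : Type} [Ring Λ] {n : ℕ}
    (d : (N : Type) → [AddCommGroup N] → [Module Λ N] → Fin n → ℕ)
    (a b : ℝ → Fin n → ℝ) : Prop :=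
  ∀ (N : Type) [AddCommGroup N] [Module Λ N] [IsNoetherian Λ N] [IsArtinian Λ N] (t₀ : ℝ),
    (∃ y : N, y ≠ 0) → Semistable d a b t₀ N → muZ a b t₀ (d N) = t₀ →
      deriv (fun t => muZ a b t (d N)) t₀ < 1

/-- `t₀(M)`: the smallest `t` with `μ_t(M) = t` (as an infimum). -/
def tzero {n : ℕ} (a b : ℝ → Fin n → ℝ) (v : Fin n → ℕ) : ℝ := sInf {t | muZ a b t v = t}

/-- `t₁(M)`: the smallest value of `t₀(M')` over nonzero submodules `M' ⊆ M`. -/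
def tone {Λ : Type} [Ring Λ] {n : ℕ}
    (d : (N : Type) → [AddCommGroup N] → [Module Λ N] → Fin n → ℕ)
    (a b : ℝ → Fin n → ℝ)
    (M : Type) [AddCommGroup M] [Module Λ M] : ℝ :=
  sInf {s : ℝ | ∃ M' : Submodule Λ M, M' ≠ ⊥ ∧ s = tzero a b (d ↥M')}

section Helpers

variable {Λ : Type} [Ring Λ] {n : ℕ}
  (d : (N : Type) → [AddCommGroup N] → [Module Λ N] → Fin n → ℕ)

lemma dprod_add' (x : Fin n → ℝ) (u v : Fin n → ℕ) :
    dprod x (u + v) = dprod x u + dprod x v := by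
  simp [dprod, Nat.cast_add, mul_add, Finset.sum_add_distrib]

variable
  (hiso : ∀ (N N' : Type) [AddCommGroup N] [Module Λ N] [AddCommGroup N'] [Module Λ N']
      [IsNoetherian Λ N] [IsArtinian Λ N], (N ≃ₗ[Λ] N') → d N = d N')
  (hadd : ∀ (N : Type) [AddCommGroup N] [Module Λ N] [IsNoetherian Λ N] [IsArtinian Λ N]
      (A : Submodule Λ N), d ↥A + d (N ⧸ A) = d N)

include hadd in
lemma dprod_split (x : Fin n → ℝ) (N : Type) [AddCommGroup N] [Module Λ N]
    [IsNoetherian Λ N] [IsArtinian Λ N] (P : Submodule Λ N) :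
    dprod x (d N) = dprod x (d ↥P) + dprod x (d (N ⧸ P)) := by
  rw [← hadd N P, dprod_add']

include hiso in
lemma le_of_iso_sub {x : Fin n → ℝ} {N : Type} [AddCommGroup N] [Module Λ N]
    (hx : x ∈ DSet d N) (M' : Type) [AddCommGroup M'] [Module Λ M']
    [IsNoetherian Λ M'] [IsArtinian Λ M'] (P : Submodule Λ N) (e : M' ≃ₗ[Λ] ↥P) :
    dprod x (d M') ≤ 0 := by
  rw [hiso M' ↥P e]; exact hx.2 P

include hiso in
lemma mem_DSet_iso {x : Fin n → ℝ} {M M' : Type} [AddCommGroup M] [Module Λ M]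
    [IsNoetherian Λ M] [IsArtinian Λ M] [AddCommGroup M'] [Module Λ M']
    [IsNoetherian Λ M'] [IsArtinian Λ M'] (e : M ≃ₗ[Λ] M')
    (hx : x ∈ DSet d M) : x ∈ DSet d M' := by
  refine ⟨by rw [← hiso M M' e]; exact hx.1, fun P' => ?_⟩
  exact le_of_iso_sub d hiso hx ↥P' (P'.map (e.symm : M' →ₗ[Λ] M))
    (e.symm.submoduleMap P')

include hiso in
lemma mem_DSet_sub {x : Fin n → ℝ} {N : Type} [AddCommGroup N] [Module Λ N]
    [IsNoetherian Λ N] [IsArtinian Λ N]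
    (hx : x ∈ DSet d N) (P : Submodule Λ N) (h0 : dprod x (d ↥P) = 0) :
    x ∈ DSet d ↥P := by
  refine ⟨h0, fun Q => ?_⟩
  exact le_of_iso_sub d hiso hx ↥Q (Q.map P.subtype)
    (Submodule.equivMapOfInjective P.subtype P.injective_subtype Q)

include hiso hadd in
lemma mem_DSet_quot {x : Fin n → ℝ} {N : Type} [AddCommGroup N] [Module Λ N]
    [IsNoetherian Λ N] [IsArtinian Λ N]
    (hx : x ∈ DSet d N) (P : Submodule Λ N) (hP : 0 ≤ dprod x (d ↥P)) :
    x ∈ DSet d (N ⧸ P) := by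
  have hP0 : dprod x (d ↥P) = 0 := le_antisymm (hx.2 P) hP
  have hsplit := dprod_split d hadd x N P
  refine ⟨by linarith [hx.1], fun Q' => ?_⟩
  set R' : Submodule Λ N := Q'.comap P.mkQ with hR'
  have hPR : P ≤ R' := fun z hz => by
    simp [hR', Submodule.mem_comap, (Submodule.Quotient.mk_eq_zero P).2 hz,
      Submodule.mkQ_apply]
  set g : ↥R' →ₗ[Λ] N ⧸ P := P.mkQ ∘ₗ R'.subtype with hg
  have hker : LinearMap.ker g = Submodule.comap R'.subtype P := by
    rw [hg, LinearMap.ker_comp, Submodule.ker_mkQ]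
  have hrange : LinearMap.range g = Q' := by
    rw [hg, LinearMap.range_comp, Submodule.range_subtype, Submodule.map_comap_eq_of_surjective
      (Submodule.mkQ_surjective P) Q']
  -- Q' ≃ R' ⧸ ker g
  have e1 : (↥R' ⧸ LinearMap.ker g) ≃ₗ[Λ] ↥Q' :=
    (g.quotKerEquivRange).trans (LinearEquiv.ofEq _ _ hrange)
  have hQ'eq : dprod x (d ↥Q') = dprod x (d (↥R' ⧸ LinearMap.ker g)) := by
    rw [hiso _ _ e1]
  have hsplitR := dprod_split d hadd x ↥R' (LinearMap.ker g)
  have hkerP : dprod x (d ↥(LinearMap.ker g)) = dprod x (d ↥P) := by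
    rw [hiso _ _ ((LinearEquiv.ofEq _ _ hker).trans
      (Submodule.comapSubtypeEquivOfLe hPR))]
  have hR'le : dprod x (d ↥R') ≤ 0 := hx.2 R'
  rw [hQ'eq]
  linarith

end Helpers
/-- For any subset `S ⊆ ℝⁿ`, the full subcategory `W(S)` of `mod-Λ`
consisting of all modules `M` with `S ⊆ D(M)` is a wide subcategory: it is closed under
direct summands, extensions, kernels and cokernels of morphisms between its objects. -/
theorem stmt6 (Λ : Type) [Ring Λ] {n : ℕ}
    (d : (N : Type) → [AddCommGroup N] → [Module Λ N] → Fin n → ℕ)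
    (hiso : ∀ (N N' : Type) [AddCommGroup N] [Module Λ N] [AddCommGroup N'] [Module Λ N']
      [IsNoetherian Λ N] [IsArtinian Λ N], (N ≃ₗ[Λ] N') → d N = d N')
    (hadd : ∀ (N : Type) [AddCommGroup N] [Module Λ N] [IsNoetherian Λ N] [IsArtinian Λ N]
      (A : Submodule Λ N), d ↥A + d (N ⧸ A) = d N)
    (hbot : ∀ (N : Type) [AddCommGroup N] [Module Λ N] [IsNoetherian Λ N] [IsArtinian Λ N],
      (∀ y : N, y = 0) → d N = 0)
    (S : Set (Fin n → ℝ)) :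
    (∀ (A B : Type) [AddCommGroup A] [Module Λ A] [IsNoetherian Λ A] [IsArtinian Λ A]
        [AddCommGroup B] [Module Λ B] [IsNoetherian Λ B] [IsArtinian Λ B],
      S ⊆ DSet d (A × B) → S ⊆ DSet d A ∧ S ⊆ DSet d B) ∧
    (∀ (E : Type) [AddCommGroup E] [Module Λ E] [IsNoetherian Λ E] [IsArtinian Λ E]
        (A : Submodule Λ E),
      S ⊆ DSet d ↥A → S ⊆ DSet d (E ⧸ A) → S ⊆ DSet d E) ∧
    (∀ (A B : Type) [AddCommGroup A] [Module Λ A] [IsNoetherian Λ A] [IsArtinian Λ A]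
        [AddCommGroup B] [Module Λ B] [IsNoetherian Λ B] [IsArtinian Λ B]
        (f : A →ₗ[Λ] B),
      S ⊆ DSet d A → S ⊆ DSet d B →
        S ⊆ DSet d ↥(LinearMap.ker f) ∧ S ⊆ DSet d (B ⧸ LinearMap.range f)) := by
  -- A key auxiliary: direct summand (left factor)
  have key : ∀ (A B : Type) [AddCommGroup A] [Module Λ A] [IsNoetherian Λ A] [IsArtinian Λ A]
      [AddCommGroup B] [Module Λ B] [IsNoetherian Λ B] [IsArtinian Λ B],
      ∀ x ∈ DSet d (A × B), x ∈ DSet d A := by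
    intro A B _ _ _ _ _ _ _ _ x hx
    set PA := Submodule.fst Λ A B with hPA
    have eA : ↥PA ≃ₗ[Λ] A := Submodule.fstEquiv Λ A B
    have eB : ↥(Submodule.snd Λ A B) ≃ₗ[Λ] B := Submodule.sndEquiv Λ A B
    have hfk : PA = LinearMap.ker (LinearMap.snd Λ A B) := rfl
    have eQ : ((A × B) ⧸ PA) ≃ₗ[Λ] B :=
      (Submodule.quotEquivOfEq _ _ hfk).trans
        (LinearMap.quotKerEquivOfSurjective _ (fun b => ⟨(0, b), rfl⟩))
    have hdA : d ↥PA = d A := hiso _ _ eA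
    have hdQ : d ((A × B) ⧸ PA) = d B := hiso _ _ eQ
    have hA_le : dprod x (d A) ≤ 0 := by rw [← hdA]; exact hx.2 PA
    have hB_le : dprod x (d B) ≤ 0 := by
      rw [← hiso _ _ eB]; exact hx.2 (Submodule.snd Λ A B)
    have hsplit := dprod_split d hadd x (A × B) PA
    rw [hdA, hdQ] at hsplit
    have hA0 : dprod x (d A) = 0 := by linarith [hx.1]
    exact mem_DSet_iso d hiso eA
      (mem_DSet_sub d hiso hx PA (by rw [hdA]; exact hA0))
  refine ⟨?_, ?_, ?_⟩
  · intro A B _ _ _ _ _ _ _ _ h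
    constructor
    · exact fun x hxS => key A B x (h hxS)
    · intro x hxS
      exact key B A x (mem_DSet_iso d hiso (LinearEquiv.prodComm Λ A B) (h hxS))
  · intro E _ _ _ _ A hA hQ x hxS
    have hAx := hA hxS
    have hQx := hQ hxS
    refine ⟨by rw [dprod_split d hadd x E A, hAx.1, hQx.1]; ring, fun E' => ?_⟩
    set g : ↥E' →ₗ[Λ] E ⧸ A := A.mkQ ∘ₗ E'.subtype with hg
    have hKeq : LinearMap.ker g = Submodule.comap E'.subtype (A ⊓ E') := by
      ext z
      simp [hg, LinearMap.mem_ker, Submodule.mem_comap, Submodule.mem_inf,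
        Submodule.Quotient.mk_eq_zero, z.2]
    have eK : ↥(LinearMap.ker g) ≃ₗ[Λ] ↥(Submodule.comap A.subtype (A ⊓ E')) :=
      (LinearEquiv.ofEq _ _ hKeq).trans
        ((Submodule.comapSubtypeEquivOfLe (inf_le_right : A ⊓ E' ≤ E')).trans
          (Submodule.comapSubtypeEquivOfLe (inf_le_left : A ⊓ E' ≤ A)).symm)
    have hK_le : dprod x (d ↥(LinearMap.ker g)) ≤ 0 :=
      le_of_iso_sub d hiso hAx _ _ eK
    have hQ_le : dprod x (d (↥E' ⧸ LinearMap.ker g)) ≤ 0 :=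
      le_of_iso_sub d hiso hQx _ (LinearMap.range g) g.quotKerEquivRange
    have hsplit := dprod_split d hadd x ↥E' (LinearMap.ker g)
    linarith
  · intro A B _ _ _ _ _ _ _ _ f hA hB
    constructor
    · intro x hxS
      have hAx := hA hxS
      have hBx := hB hxS
      have hq_le : dprod x (d (A ⧸ LinearMap.ker f)) ≤ 0 :=
        le_of_iso_sub d hiso hBx _ (LinearMap.range f) f.quotKerEquivRange
      have hsplit := dprod_split d hadd x A (LinearMap.ker f)
      have h0 : dprod x (d ↥(LinearMap.ker f)) = 0 :=
        le_antisymm (hAx.2 _) (by linarith [hAx.1])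
      exact mem_DSet_sub d hiso hAx (LinearMap.ker f) h0
    · intro x hxS
      have hAx := hA hxS
      have hBx := hB hxS
      have hdr : d ↥(LinearMap.range f) = d (A ⧸ LinearMap.ker f) :=
        hiso _ _ f.quotKerEquivRange.symm
      have hsplit := dprod_split d hadd x A (LinearMap.ker f)
      have hk_le : dprod x (d ↥(LinearMap.ker f)) ≤ 0 := hAx.2 _
      have hPge : 0 ≤ dprod x (d ↥(LinearMap.range f)) := by
        rw [hdr]; linarith [hAx.1]
      exact mem_DSet_quot d hiso hadd hBx (LinearMap.range f) hPge
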